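/- Integration by parts together with the Sturm-Liouville equation yields the identity A¹_{n,m} + A²_{n,m} = -c_m ∫_{-H}^0 V̄'(r) c_n f_n'(r) f_m(r) ρ(r) dr, where A¹_{n,m} = ∫ V̄ g_n g_m ρ, A²_{n,m} = -(c_m/c_n) ∫ V̄ f_n f_m ρ N², and g_n = c_n f_n'. -/

import Mathlib

/-- Integration by parts together with the Sturm-Liouville equation
yields `A¹_{n,m} + A²_{n,m} = -c_m ∫_{-H}^0 V̄' (c_n f_n') f_m ρ`, where
`A¹_{n,m} = ∫ V̄ g_n g_m ρ`, `A²_{n,m} = -(c_m/c_n) ∫ V̄ f_n f_m ρ N²`,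
`g_n = c_n f_n'` and `N² = -g ρ'/ρ`. -/
theorem stmt7 (H g cs : ℝ) (hH : 0 < H) (hg : 0 < g) (hcs : 0 < cs)
    (ρ Vb : ℝ → ℝ) (hρ : ContDiff ℝ (⊤ : ℕ∞) ρ) (hVb : ContDiff ℝ (⊤ : ℕ∞) Vb)
    (hρlb : ∀ r ∈ Set.Icc (-H) 0, cs ≤ ρ r)
    (c : ℕ → ℝ) (hc : ∀ n, 0 < c n)
    (f : ℕ → ℝ → ℝ) (hf : ∀ n, ContDiff ℝ (⊤ : ℕ∞) (f n))
    (hbcH : ∀ n, f n (-H) = 0) (hbc0 : ∀ n, f n 0 = 0)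
    (hSL : ∀ n, ∀ r ∈ Set.Ioo (-H) 0,
      deriv (fun u => ρ u * deriv (f n) u) r
        = -(ρ r * (-g * deriv ρ r / ρ r) / (c n) ^ 2) * f n r) :
    ∀ n m,
      (∫ r in (-H)..0, Vb r * (c n * deriv (f n) r) * (c m * deriv (f m) r) * ρ r)
        + (-(c m / c n)
            * ∫ r in (-H)..0, Vb r * f n r * f m r * ρ r * (-g * deriv ρ r / ρ r))
      = -(c m) * ∫ r in (-H)..0, deriv Vb r * (c n * deriv (f n) r) * f m r * ρ r := by
  intro n m
  have hab : (-H : ℝ) ≤ 0 := by linarith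
  have hcn : c n ≠ 0 := (hc n).ne'
  -- continuity facts
  have hρ2 : ContDiff ℝ (⊤:ℕ∞) ρ := hρ.of_le (mod_cast le_top)
  have hVb2 : ContDiff ℝ (⊤:ℕ∞) Vb := hVb.of_le (mod_cast le_top)
  have hf2 : ∀ k, ContDiff ℝ (⊤:ℕ∞) (f k) := fun k => (hf k).of_le (mod_cast le_top)
  have hρc : Continuous ρ := hρ.continuous
  have hρ' : Continuous (deriv ρ) := (contDiff_infty_iff_deriv.mp hρ2).2.continuous
  have hVbc : Continuous Vb := hVb.continuous
  have hVb' : Continuous (deriv Vb) := (contDiff_infty_iff_deriv.mp hVb2).2.continuous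
  have hfc : ∀ k, Continuous (f k) := fun k => (hf k).continuous
  have hf' : ∀ k, Continuous (deriv (f k)) :=
    fun k => (contDiff_infty_iff_deriv.mp (hf2 k)).2.continuous
  have hρne : ∀ r ∈ Set.Icc (-H) 0, ρ r ≠ 0 :=
    fun r hr => (lt_of_lt_of_le hcs (hρlb r hr)).ne'
  have huIcc : Set.uIcc (-H : ℝ) 0 = Set.Icc (-H) 0 := Set.uIcc_of_le hab
  -- differentiability of ρ * f n'
  have hPd : Differentiable ℝ (fun u => ρ u * deriv (f n) u) :=
    (hρ2.differentiable (by simp)).mul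
      ((contDiff_infty_iff_deriv.mp (hf2 n)).2.differentiable (by simp))
  -- the function we integrate by parts
  set F : ℝ → ℝ := fun u => (Vb u * f m u) * (ρ u * deriv (f n) u) with hF
  set G : ℝ → ℝ := fun r =>
      (deriv Vb r * f m r + Vb r * deriv (f m) r) * (ρ r * deriv (f n) r)
        + (Vb r * f m r) * (-(ρ r * (-g * deriv ρ r / ρ r) / (c n) ^ 2) * f n r) with hG
  have hderiv : ∀ r ∈ Set.Ioo (-H : ℝ) 0, HasDerivAt F (G r) r := by
    intro r hr
    have h1 : HasDerivAt Vb (deriv Vb r) r :=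
      ((hVb2.differentiable (by simp)) r).hasDerivAt
    have h2 : HasDerivAt (f m) (deriv (f m) r) r :=
      (((hf2 m).differentiable (by simp)) r).hasDerivAt
    have h3 : HasDerivAt (fun u => ρ u * deriv (f n) u)
        (deriv (fun u => ρ u * deriv (f n) u) r) r := (hPd r).hasDerivAt
    rw [hSL n r hr] at h3
    exact (h1.mul h2).mul h3
  have hFcont : ContinuousOn F (Set.Icc (-H) 0) :=
    (((hVbc.mul (hfc m)).mul (hρc.mul (hf' n)))).continuousOn
  have hGcont : ContinuousOn G (Set.Icc (-H) 0) := by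
    apply ContinuousOn.add
    · exact (((hVb'.mul (hfc m)).add (hVbc.mul (hf' m))).mul
        (hρc.mul (hf' n))).continuousOn
    · apply ContinuousOn.mul (hVbc.mul (hfc m)).continuousOn
      apply ContinuousOn.mul _ (hfc n).continuousOn
      apply ContinuousOn.neg
      apply ContinuousOn.div_const
      exact ContinuousOn.mul hρc.continuousOn
        ((continuous_const.mul hρ').continuousOn.div hρc.continuousOn hρne)
  have hGint : IntervalIntegrable G MeasureTheory.volume (-H) 0 :=
    (hGcont.mono (by rw [huIcc])).intervalIntegrable
  have key : (∫ r in (-H)..0, G r) = 0 := by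
    rw [intervalIntegral.integral_eq_sub_of_hasDerivAt_of_le hab hFcont hderiv hGint]
    simp [hF, hbc0 m, hbcH m]
  -- the three integrands
  set i1 : ℝ → ℝ := fun r => Vb r * (c n * deriv (f n) r) * (c m * deriv (f m) r) * ρ r
  set i2 : ℝ → ℝ := fun r => Vb r * f n r * f m r * ρ r * (-g * deriv ρ r / ρ r)
  set i3 : ℝ → ℝ := fun r => deriv Vb r * (c n * deriv (f n) r) * f m r * ρ r
  have hi1 : IntervalIntegrable i1 MeasureTheory.volume (-H) 0 :=
    ((hVbc.mul (continuous_const.mul (hf' n))).mul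
      (continuous_const.mul (hf' m))).mul hρc |>.intervalIntegrable _ _
  have hi2 : IntervalIntegrable i2 MeasureTheory.volume (-H) 0 := by
    apply ContinuousOn.intervalIntegrable
    rw [huIcc]
    exact ((((hVbc.mul (hfc n)).mul (hfc m)).mul hρc).continuousOn).mul
      (((continuous_const.mul hρ').continuousOn).div hρc.continuousOn hρne)
  have hi3 : IntervalIntegrable i3 MeasureTheory.volume (-H) 0 :=
    (((hVb'.mul (continuous_const.mul (hf' n))).mul (hfc m)).mul hρc).intervalIntegrable _ _
  -- pointwise identity
  have hpt : ∀ r, c n * c m * G r = i1 r + (-(c m / c n)) * i2 r + c m * i3 r := by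
    intro r
    simp only [hG, i1, i2, i3]
    linear_combination (-(c m) * Vb r * f m r * ρ r * (-g * deriv ρ r / ρ r)
      * f n r / c n) * (mul_inv_cancel₀ hcn)
  have hsum : (∫ r in (-H)..0, i1 r) + (-(c m / c n)) * (∫ r in (-H)..0, i2 r)
      + c m * (∫ r in (-H)..0, i3 r) = 0 := by
    have : (∫ r in (-H)..0, (i1 r + (-(c m / c n)) * i2 r + c m * i3 r)) = 0 := by
      rw [show (fun r => i1 r + (-(c m / c n)) * i2 r + c m * i3 r)
          = fun r => c n * c m * G r from funext fun r => (hpt r).symm]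
      rw [intervalIntegral.integral_const_mul, key, mul_zero]
    rw [intervalIntegral.integral_add (hi1.add (hi2.const_mul _)) (hi3.const_mul _),
        intervalIntegral.integral_add hi1 (hi2.const_mul _),
        intervalIntegral.integral_const_mul, intervalIntegral.integral_const_mul] at this
    linarith
  linarith
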